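/- Let A, B : I^n → I be standardized functions with A ≤ B and fix an integer k with 1 ≤ k ≤ n. Suppose at least one of A and B satisfies Condition S with some countable set S ⊆ [0,1], and that L_k^{(A,B)}(DU) ≥ 0 for all DU ∈ R_k(I^n). Then the following are equivalent: (i) P⁺_k^{(A,B)}(x) ≥ B(x) − A(x) for all x ∈ I^n; (ii) for all x ∈ I^n, A(x) = inf{C(x) : C : I^n → I, A ≤ C ≤ B, C a k-increasing standardized function}. -/

import Mathlib

open scoped Classical BigOperators

namespace KIncr

/-- Points of the ambient space `ℝ^n`. -/
abbrev Pt (n : ℕ) := Fin n → ℝ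

/-- Membership in the unit cube `I^n = [0,1]^n`. -/
def inCube {n : ℕ} (x : Pt n) : Prop := ∀ i, x i ∈ Set.Icc (0:ℝ) 1

/-- The unit cube as a set. -/
def cubeSet (n : ℕ) : Set (Pt n) := {x | inCube x}

/-- Vertices of the unit cube `I^n`. -/
def isCubeVertex {n : ℕ} (x : Pt n) : Prop := ∀ i, x i = 0 ∨ x i = 1

/-- A (formal) box, given by its lower-left and upper-right corners. -/
structure Box (n : ℕ) where
  lo : Pt n
  hi : Pt n

/-- `R` is a `k`-box in `I^n`: exactly `k` coordinates are nondegenerate. -/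
def Box.IsKBox {n : ℕ} (k : ℕ) (R : Box n) : Prop :=
  inCube R.lo ∧ inCube R.hi ∧ (∀ i, R.lo i ≤ R.hi i) ∧
    (Finset.univ.filter (fun i => R.lo i < R.hi i)).card = k

/-- `v` is a vertex of the box `R`. -/
def Box.IsVertex {n : ℕ} (R : Box n) (v : Pt n) : Prop :=
  ∀ i, v i = R.lo i ∨ v i = R.hi i

/-- The (finite) set of vertices of a box. -/
noncomputable def Box.vertices {n : ℕ} (R : Box n) : Finset (Pt n) :=
  Finset.image (fun ε : Fin n → Bool => fun i => if ε i then R.hi i else R.lo i)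
    Finset.univ

/-- The sign `(-1)^(m-(n-k))` of a vertex `v` of a `k`-box, where
`m = #{i : v i = lo i}`;  since `m ≥ n - k`, this equals `(-1)^(m+(n-k))`. -/
noncomputable def Box.sign {n : ℕ} (k : ℕ) (R : Box n) (v : Pt n) : ℤ :=
  (-1) ^ ((Finset.univ.filter (fun i => v i = R.lo i)).card + (n - k))

/-- The multiplicity `m_R(u)` of a point `u` with respect to a `k`-box `R`. -/
noncomputable def Box.mult {n : ℕ} (k : ℕ) (R : Box n) (u : Pt n) : ℤ :=
  if R.IsVertex u then R.sign k u else 0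

/-- `V_{A,k}(R) = ∑_{v ∈ ver R} sign_R(v) · A(v)`. -/
noncomputable def Vvol {n : ℕ} (k : ℕ) (A : Pt n → ℝ) (R : Box n) : ℝ :=
  ∑ v ∈ R.vertices, (R.sign k v : ℝ) * A v

/-- A function is `k`-increasing on `D` if `V_{A,k}(R) ≥ 0` for every `k`-box
with all vertices in `D`. -/
def KIncreasingOn {n : ℕ} (k : ℕ) (D : Set (Pt n)) (A : Pt n → ℝ) : Prop :=
  ∀ R : Box n, R.IsKBox k → (∀ v ∈ R.vertices, v ∈ D) → 0 ≤ Vvol k A R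

/-- The multiplicity `m_DU(u)` of a point with respect to a formal (multiset)
disjoint union of `k`-boxes. -/
noncomputable def multDU {n : ℕ} (k : ℕ) (DU : Multiset (Box n)) (u : Pt n) : ℤ :=
  (DU.map (fun R => R.mult k u)).sum

/-- `DU ∈ R_k(D)`: every box of the multiset `DU` is a `k`-box with all its
vertices in `D`. -/
def memRk {n : ℕ} (k : ℕ) (D : Set (Pt n)) (DU : Multiset (Box n)) : Prop :=
  ∀ R ∈ DU, R.IsKBox k ∧ ∀ v ∈ R.vertices, v ∈ D

/-- `L_k^{(A,B)}(DU) = ∑_{m_DU(u)>0} m_DU(u)·B(u) + ∑_{m_DU(u)<0} m_DU(u)·A(u)`. -/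
noncomputable def Lk {n : ℕ} (k : ℕ) (A B : Pt n → ℝ) (DU : Multiset (Box n)) : ℝ :=
  ∑ u ∈ DU.toFinset.biUnion Box.vertices,
    (if 0 < multDU k DU u then (multDU k DU u : ℝ) * B u
     else if multDU k DU u < 0 then (multDU k DU u : ℝ) * A u else 0)

/-- `P⁻_{k,D}^{(A,B)}(x)`, with the Mathlib convention `sInf ∅ = 0`. -/
noncomputable def Pneg {n : ℕ} (k : ℕ) (D : Set (Pt n)) (A B : Pt n → ℝ) (x : Pt n) : ℝ :=
  sInf {r : ℝ | ∃ DU : Multiset (Box n), memRk k D DU ∧ multDU k DU x < 0 ∧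
    r = Lk k A B DU / |(multDU k DU x : ℝ)|}

/-- `P⁺_{k,D}^{(A,B)}(x)`, with the Mathlib convention `sInf ∅ = 0`. -/
noncomputable def Ppos {n : ℕ} (k : ℕ) (D : Set (Pt n)) (A B : Pt n → ℝ) (x : Pt n) : ℝ :=
  sInf {r : ℝ | ∃ DU : Multiset (Box n), memRk k D DU ∧ 0 < multDU k DU x ∧
    r = Lk k A B DU / |(multDU k DU x : ℝ)|}

/-- `γ_{k,D}^{(A,B)}(x) = min {P⁻_{k,D}^{(A,B)}(x), B(x) - A(x)}`. -/
noncomputable def gammaK {n : ℕ} (k : ℕ) (D : Set (Pt n)) (A B : Pt n → ℝ) (x : Pt n) : ℝ :=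
  min (Pneg k D A B x) (B x - A x)

/-- `δ_{k,D}^{(A,B)}(x) = min {P⁺_{k,D}^{(A,B)}(x), B(x) - A(x)}`. -/
noncomputable def deltaK {n : ℕ} (k : ℕ) (D : Set (Pt n)) (A B : Pt n → ℝ) (x : Pt n) : ℝ :=
  min (Ppos k D A B x) (B x - A x)

/-- A dense countably infinite mesh `D = ∏ δᵢ` in `I^n`. -/
def IsMesh {n : ℕ} (D : Set (Pt n)) : Prop :=
  ∃ δ : Fin n → Set ℝ,
    (∀ i, δ i ⊆ Set.Icc (0:ℝ) 1 ∧ (δ i).Countable ∧ (δ i).Infinite ∧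
      Set.Icc (0:ℝ) 1 ⊆ closure (δ i) ∧ (0:ℝ) ∈ δ i ∧ (1:ℝ) ∈ δ i) ∧
    D = {x : Pt n | ∀ i, x i ∈ δ i}

/-- `A` is grounded: it vanishes whenever some coordinate is `0`. -/
def Grounded {n : ℕ} (A : Pt n → ℝ) : Prop :=
  ∀ x : Pt n, inCube x → (∃ i, x i = 0) → A x = 0

/-- `A` is 1-increasing (increasing in each variable). -/
def OneIncreasing {n : ℕ} (A : Pt n → ℝ) : Prop :=
  ∀ x y : Pt n, inCube x → inCube y → (∀ i, x i ≤ y i) → A x ≤ A y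

/-- `A` has uniform marginals. -/
def UniformMarginals {n : ℕ} (A : Pt n → ℝ) : Prop :=
  ∀ i : Fin n, ∀ t ∈ Set.Icc (0:ℝ) 1, A (Function.update (fun _ => (1:ℝ)) i t) = t

/-- `A` is a standardized function. -/
def Standardized {n : ℕ} (A : Pt n → ℝ) : Prop :=
  Grounded A ∧ OneIncreasing A ∧ A (fun _ => (1:ℝ)) = 1

/-- `A` is a semicopula. -/
def Semicopula {n : ℕ} (A : Pt n → ℝ) : Prop :=
  Grounded A ∧ OneIncreasing A ∧ UniformMarginals A

/-- `A` maps the unit cube into `I = [0,1]`. -/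
def MapsToI {n : ℕ} (A : Pt n → ℝ) : Prop :=
  ∀ x : Pt n, inCube x → A x ∈ Set.Icc (0:ℝ) 1

/-- Condition S: all discontinuities of all sections of `A` lie in the
countable set `S`. -/
def CondS {n : ℕ} (A : Pt n → ℝ) (S : Set ℝ) : Prop :=
  ∀ u : Pt n, inCube u → ∀ i : Fin n, ∀ t ∈ Set.Icc (0:ℝ) 1, t ∉ S →
    ContinuousWithinAt (fun s => A (Function.update u i s)) (Set.Icc (0:ℝ) 1) t

/-- A quasi-copula: a semicopula that is 1-Lipschitz w.r.t. the ℓ¹-norm. -/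
def QuasiCopula {n : ℕ} (A : Pt n → ℝ) : Prop :=
  Semicopula A ∧ ∀ x y : Pt n, inCube x → inCube y → |A x - A y| ≤ ∑ i, |x i - y i|

end KIncr

open KIncr

/-!
(i) ⇒ (ii): fix `x` and lower the upper bound `B` to `A(x)` at `x`; hypothesis (i) is exactly
what keeps `L_k` nonnegative. Nonnegativity of `L_k` is the dual condition for the existence of a
`k`-increasing function between two bounds: for finitely many boxes this is linear programming
duality (Hahn–Banach separation, then rational approximation of the multipliers, which turns them
into a multiset of boxes), and compactness of `∏_u [ℓ(u), h(u)]` passes to all boxes. The function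
obtained equals `A` at `x`; being grounded and `k`-increasing it is `j`-increasing for all `j ≤ k`,
hence increasing, hence standardized.

(ii) ⇒ (i): an admissible `C` has `∑_u m_DU(u) C(u) = ∑_{R ∈ DU} V_{C,k}(R) ≥ 0`, which together
with `A ≤ C ≤ B` bounds `L_k(DU)` below by `m_DU(x) (B(x) - C(x))`; the infimum over `C` gives
`P⁺(x) ≥ B(x) - A(x)`.
-/

open Filter Topology in
lemma nonneg_of_nonneg_natCast {ι : Type*} [Fintype ι] {Θ : (ι → ℝ) → ℝ} (hΘ : Continuous Θ)
    (hhom : ∀ t : ℝ, 0 < t → ∀ μ, Θ (t • μ) = t * Θ μ) (hnat : ∀ N : ι → ℕ, 0 ≤ Θ fun j => N j)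
    {w : ι → ℝ} (hw : 0 ≤ w) : 0 ≤ Θ w := by
  have hlim : Tendsto (fun x : ℝ => Θ fun j => (⌊w j * x⌋₊ : ℝ) / x) atTop (𝓝 (Θ w)) :=
    (hΘ.tendsto w).comp (tendsto_pi_nhds.mpr fun j => tendsto_nat_floor_mul_div_atTop (hw j))
  refine ge_of_tendsto hlim (eventually_gt_atTop 0 |>.mono fun x hx => ?_)
  have : (fun j => (⌊w j * x⌋₊ : ℝ) / x) = x⁻¹ • fun j => (⌊w j * x⌋₊ : ℝ) := by
    funext j; simp [div_eq_inv_mul]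
  rw [this, hhom _ (inv_pos.mpr hx)]
  exact mul_nonneg (inv_nonneg.mpr hx.le) (hnat _)

lemma exists_nonneg_weights_neg_of_forall_exists_neg {E ι : Type*} [AddCommGroup E] [Module ℝ E]
    [TopologicalSpace E] [Fintype ι] {K : Set E} (hK : IsCompact K) (hKc : Convex ℝ K)
    (V : E →L[ℝ] ι → ℝ) (hV : ∀ c ∈ K, ∃ j, V c j < 0) :
    ∃ w : ι → ℝ, 0 ≤ w ∧ ∀ c ∈ K, ∑ j, w j * V c j < 0 := by
  have hdisj : Disjoint (V '' K) (Set.Ici 0) := by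
    refine Set.disjoint_left.mpr ?_
    rintro _ ⟨c, hc, rfl⟩ hnn
    obtain ⟨j, hj⟩ := hV c hc
    exact hj.not_ge (hnn j)
  obtain ⟨f, u, v, hfK, huv, hft⟩ := geometric_hahn_banach_compact_closed
    (hKc.linear_image V.toLinearMap) (hK.image V.continuous) (convex_Ici 0) isClosed_Ici hdisj
  have hv : v < 0 := by simpa using hft 0 (Set.mem_Ici.mpr le_rfl)
  have hf_nonneg : ∀ y ∈ Set.Ici (0 : ι → ℝ), 0 ≤ f y := by
    intro y hy
    by_contra! hneg
    have hscale : (v / f y) • y ∈ Set.Ici (0 : ι → ℝ) :=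
      Set.mem_Ici.mpr (smul_nonneg (div_nonneg_of_nonpos hv.le hneg.le) hy)
    have := hft _ hscale
    rw [map_smul, smul_eq_mul, div_mul_cancel₀ v hneg.ne] at this
    exact this.false
  refine ⟨fun j => f fun j' => if j = j' then 1 else 0, fun j => hf_nonneg _ fun j' => ?_,
    fun c hc => ?_⟩
  · dsimp only; split_ifs <;> norm_num
  · have hrepr := LinearMap.pi_apply_eq_sum_univ f.toLinearMap (V c)
    simp only [ContinuousLinearMap.coe_coe, smul_eq_mul] at hrepr
    simp_rw [mul_comm _ (V c _), ← hrepr]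
    exact (hfK _ ⟨c, hc, rfl⟩).trans (huv.trans hv)

lemma exists_mem_Icc_forall_sum_mul_nonneg {X ι : Type*} [Fintype ι] (U : Finset X)
    (a : ι → X → ℝ) {ℓ h : X → ℝ} (hℓh : ℓ ≤ h)
    (hdual : ∀ N : ι → ℕ, 0 ≤ ∑ u ∈ U,
      max ((∑ j, (N j : ℝ) * a j u) * h u) ((∑ j, (N j : ℝ) * a j u) * ℓ u)) :
    ∃ c ∈ Set.Icc ℓ h, ∀ j, 0 ≤ ∑ u ∈ U, a j u * c u := by
  by_contra! hcon
  let V : (X → ℝ) →L[ℝ] ι → ℝ :=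
    ContinuousLinearMap.pi fun j => ∑ u ∈ U, a j u • ContinuousLinearMap.proj u
  have hV : ∀ c j, V c j = ∑ u ∈ U, a j u * c u := fun c j => by simp [V]
  obtain ⟨w, hw, hwK⟩ := exists_nonneg_weights_neg_of_forall_exists_neg isCompact_Icc
    (convex_Icc ℓ h) V fun c hc => by simpa only [hV] using hcon c hc
  set s : X → ℝ := fun u => ∑ j, w j * a j u
  let Θ : (ι → ℝ) → ℝ := fun μ =>
    ∑ u ∈ U, max ((∑ j, μ j * a j u) * h u) ((∑ j, μ j * a j u) * ℓ u)
  have hΘ : 0 ≤ Θ w := by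
    refine nonneg_of_nonneg_natCast (by fun_prop) (fun t ht μ => ?_) hdual hw
    have hlin : ∀ u, ∑ j, (t • μ) j * a j u = t * ∑ j, μ j * a j u := fun u => by
      simp [Finset.mul_sum, mul_assoc]
    simp only [Θ, hlin, Finset.mul_sum (s := U)]
    refine Finset.sum_congr rfl fun u _ => ?_
    rw [mul_assoc, mul_assoc, mul_max_of_nonneg _ _ ht.le]
  -- the maximum of `c ↦ ∑ u, s u * c u` over `[ℓ, h]` is `Θ w`, attained at this corner
  let cmax : X → ℝ := fun u => if 0 ≤ s u then h u else ℓ u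
  have hcmax : cmax ∈ Set.Icc ℓ h := ⟨fun u => by
    dsimp only [cmax]; split_ifs; exacts [hℓh u, le_rfl], fun u => by
    dsimp only [cmax]; split_ifs; exacts [le_rfl, hℓh u]⟩
  have hval : ∑ j, w j * V cmax j = Θ w := by
    simp only [hV, Finset.mul_sum, Θ]
    rw [Finset.sum_comm]
    refine Finset.sum_congr rfl fun u _ => ?_
    rw [show ∑ j, w j * (a j u * cmax u) = s u * cmax u by simp [s, Finset.sum_mul, mul_assoc]]
    dsimp only [cmax]
    split_ifs with hsu
    · exact (max_eq_left (mul_le_mul_of_nonneg_left (hℓh u) hsu)).symm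
    · exact (max_eq_right (mul_le_mul_of_nonpos_left (hℓh u) (not_le.mp hsu).le)).symm
  exact (hwK cmax hcmax).not_ge (hval ▸ hΘ)

namespace KIncr

open Finset

variable {n k : ℕ}

namespace Box

noncomputable def nondeg (R : Box n) : Finset (Fin n) := univ.filter fun i => R.lo i < R.hi i

lemma mem_vertices_iff {R : Box n} {v : Pt n} : v ∈ R.vertices ↔ R.IsVertex v := by
  simp only [vertices, mem_image, mem_univ, true_and]
  constructor
  · rintro ⟨ε, rfl⟩ i
    cases h : ε i <;> simp [h]
  · intro hv
    refine ⟨fun i => decide (v i = R.hi i), funext fun i => ?_⟩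
    by_cases h : v i = R.hi i
    · simp [h]
    · simp [h, ((hv i).resolve_right h).symm]

lemma IsKBox.mem_cubeSet_of_mem_vertices {R : Box n} (hR : R.IsKBox k) {v : Pt n}
    (hv : v ∈ R.vertices) : v ∈ cubeSet n := fun i => by
  rcases mem_vertices_iff.mp hv i with h | h <;> rw [h]
  exacts [hR.1 i, hR.2.1 i]

lemma lo_eq_hi_of_notMem_nondeg {R : Box n} (hle : ∀ i, R.lo i ≤ R.hi i) {i : Fin n}
    (hi : i ∉ R.nondeg) : R.lo i = R.hi i :=
  (hle i).antisymm (by simpa [nondeg] using hi)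

lemma vertices_eq_image_powerset {R : Box n} (hle : ∀ i, R.lo i ≤ R.hi i) :
    R.vertices = R.nondeg.powerset.image fun s => s.piecewise R.hi R.lo := by
  ext v
  simp only [mem_vertices_iff, mem_image, mem_powerset]
  constructor
  · intro hv
    refine ⟨R.nondeg.filter fun i => v i = R.hi i, filter_subset _ _, funext fun i => ?_⟩
    by_cases hi : i ∈ R.nondeg
    · by_cases h : v i = R.hi i
      · rw [piecewise_eq_of_mem _ _ _ (mem_filter.mpr ⟨hi, h⟩), h]
      · have hm : i ∉ R.nondeg.filter fun i => v i = R.hi i := fun hm => h (mem_filter.mp hm).2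
        rw [piecewise_eq_of_notMem _ _ _ hm]
        exact ((hv i).resolve_right h).symm
    · have hm : i ∉ R.nondeg.filter fun i => v i = R.hi i := fun hm => hi (mem_filter.mp hm).1
      rw [piecewise_eq_of_notMem _ _ _ hm]
      rcases hv i with h | h <;> simp [h, lo_eq_hi_of_notMem_nondeg hle hi]
  · rintro ⟨s, -, rfl⟩ i
    by_cases hi : i ∈ s <;> simp [hi]

lemma piecewise_injOn_powerset_nondeg (R : Box n) :
    Set.InjOn (fun s : Finset (Fin n) => s.piecewise R.hi R.lo) R.nondeg.powerset := by
  intro s hs t ht hst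
  have hne : ∀ i ∈ R.nondeg, R.hi i ≠ R.lo i := fun i hi => by
    simp only [nondeg, mem_filter, mem_univ, true_and] at hi; exact hi.ne'
  ext i
  have := congrFun hst i
  by_cases his : i ∈ s <;> by_cases hit : i ∈ t <;> simp only [his, hit, piecewise_eq_of_mem,
    piecewise_eq_of_notMem, not_false_eq_true] at this ⊢
  exacts [absurd this (hne i (mem_powerset.mp hs his)),
    absurd this.symm (hne i (mem_powerset.mp ht hit))]

lemma sign_piecewise {R : Box n} (hR : R.IsKBox k) {s : Finset (Fin n)} (hs : s ⊆ R.nondeg) :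
    R.sign k (s.piecewise R.hi R.lo) = (-1) ^ #(R.nondeg \ s) := by
  have hlo : univ.filter (fun i => s.piecewise R.hi R.lo i = R.lo i) = sᶜ := by
    ext i
    by_cases hi : i ∈ s
    · have : R.lo i < R.hi i := by simpa [nondeg] using hs hi
      simp [hi, this.ne']
    · simp [hi]
  have hk : #R.nondeg = k := hR.2.2.2
  have hsk : #s ≤ k := hk ▸ card_le_card hs
  have hkn : k ≤ n := hk ▸ (card_le_univ _).trans_eq (Fintype.card_fin n)
  rw [sign, hlo, card_compl, Fintype.card_fin, card_sdiff_of_subset hs, hk,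
    show n - #s + (n - k) = (k - #s) + 2 * (n - k) by omega, pow_add, pow_mul]
  simp

lemma sign_hi {R : Box n} (hR : R.IsKBox k) : R.sign k R.hi = 1 := by
  have htop : R.nondeg.piecewise R.hi R.lo = R.hi := funext fun i => by
    by_cases hi : i ∈ R.nondeg
    · rw [piecewise_eq_of_mem _ _ _ hi]
    · rw [piecewise_eq_of_notMem _ _ _ hi, lo_eq_hi_of_notMem_nondeg hR.2.2.1 hi]
  rw [← htop, sign_piecewise hR subset_rfl]
  simp

end Box

lemma Vvol_eq_sum_powerset {R : Box n} (hR : R.IsKBox k) (C : Pt n → ℝ) :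
    Vvol k C R = ∑ s ∈ R.nondeg.powerset, (-1) ^ #(R.nondeg \ s) * C (s.piecewise R.hi R.lo) := by
  rw [Vvol, Box.vertices_eq_image_powerset hR.2.2.1,
    sum_image (Box.piecewise_injOn_powerset_nondeg R)]
  refine sum_congr rfl fun s hs => ?_
  rw [Box.sign_piecewise hR (mem_powerset.mp hs)]
  push_cast
  rfl

lemma Box.sum_mult_mul (R : Box n) (C : Pt n → ℝ) {F : Finset (Pt n)} (hF : R.vertices ⊆ F) :
    ∑ u ∈ F, (R.mult k u : ℝ) * C u = Vvol k C R := by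
  rw [Vvol, ← sum_subset hF]
  · refine sum_congr rfl fun v hv => ?_
    rw [Box.mult, if_pos (mem_vertices_iff.mp hv)]
  · intro u _ hu
    rw [Box.mult, if_neg fun h => hu (mem_vertices_iff.mpr h), Int.cast_zero, zero_mul]

noncomputable def allVertices (DU : Multiset (Box n)) : Finset (Pt n) :=
  DU.toFinset.biUnion Box.vertices

lemma vertices_subset_allVertices {DU : Multiset (Box n)} {R : Box n} (hR : R ∈ DU) :
    R.vertices ⊆ allVertices DU :=
  subset_biUnion_of_mem _ (Multiset.mem_toFinset.mpr hR)

lemma memRk.mem_of_mem_allVertices {D : Set (Pt n)} {DU : Multiset (Box n)} (hDU : memRk k D DU)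
    {u : Pt n} (hu : u ∈ allVertices DU) : u ∈ D := by
  obtain ⟨R, hR, hv⟩ := mem_biUnion.mp hu
  exact (hDU R (Multiset.mem_toFinset.mp hR)).2 u hv

lemma multDU_eq_zero_of_notMem {DU : Multiset (Box n)} {u : Pt n} (hu : u ∉ allVertices DU) :
    multDU k DU u = 0 := by
  refine Multiset.sum_eq_zero fun z hz => ?_
  obtain ⟨R, hR, rfl⟩ := Multiset.mem_map.mp hz
  rw [Box.mult, if_neg fun hv => hu (vertices_subset_allVertices hR (Box.mem_vertices_iff.mpr hv))]

lemma sum_multDU_mul (DU : Multiset (Box n)) (C : Pt n → ℝ) {F : Finset (Pt n)}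
    (hF : ∀ R ∈ DU, R.vertices ⊆ F) :
    ∑ u ∈ F, (multDU k DU u : ℝ) * C u = (DU.map (Vvol k C)).sum := by
  induction DU using Multiset.induction_on with
  | empty => simp [multDU]
  | cons R DU ih =>
    have hR := hF R (Multiset.mem_cons_self R DU)
    simp only [multDU, Multiset.map_cons, Multiset.sum_cons, Int.cast_add, add_mul,
      sum_add_distrib, R.sum_mult_mul C hR]
    rw [← ih fun R' hR' => hF R' (Multiset.mem_cons_of_mem hR')]
    rfl

lemma multDU_add (D₁ D₂ : Multiset (Box n)) (u : Pt n) :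
    multDU k (D₁ + D₂) u = multDU k D₁ u + multDU k D₂ u := by
  simp [multDU]

lemma multDU_sum_replicate {ι : Type*} [Fintype ι] (R : ι → Box n) (N : ι → ℕ) (u : Pt n) :
    multDU k (∑ j, Multiset.replicate (N j) (R j)) u = ∑ j, (N j : ℤ) * (R j).mult k u := by
  have := map_sum (AddMonoidHom.mk' (fun D => multDU k D u) fun D₁ D₂ => multDU_add D₁ D₂ u)
    (fun j => Multiset.replicate (N j) (R j)) Finset.univ
  simp only [AddMonoidHom.mk'_apply] at this
  rw [this]
  simp [multDU]

lemma KIncreasingOn.sum_multDU_mul_nonneg {D : Set (Pt n)} {C : Pt n → ℝ}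
    (hC : KIncreasingOn k D C) {DU : Multiset (Box n)} (hDU : memRk k D DU) :
    0 ≤ ∑ u ∈ allVertices DU, (multDU k DU u : ℝ) * C u := by
  rw [sum_multDU_mul DU C fun R => vertices_subset_allVertices]
  refine Multiset.sum_nonneg fun z hz => ?_
  obtain ⟨R, hR, rfl⟩ := Multiset.mem_map.mp hz
  exact hC R (hDU R hR).1 (hDU R hR).2

noncomputable def lkTerm (m : ℤ) (a b : ℝ) : ℝ :=
  if 0 < m then (m : ℝ) * b else if m < 0 then (m : ℝ) * a else 0

lemma Lk_eq_sum_lkTerm (A B : Pt n → ℝ) (DU : Multiset (Box n)) :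
    Lk k A B DU = ∑ u ∈ allVertices DU, lkTerm (multDU k DU u) (A u) (B u) := rfl

lemma mul_le_lkTerm {m : ℤ} {a b c : ℝ} (hac : a ≤ c) (hcb : c ≤ b) : m * c ≤ lkTerm m a b := by
  unfold lkTerm
  rcases lt_trichotomy m 0 with hm | rfl | hm
  · rw [if_neg hm.not_gt, if_pos hm]
    exact mul_le_mul_of_nonpos_left hac (by exact_mod_cast hm.le)
  · simp
  · rw [if_pos hm]
    exact mul_le_mul_of_nonneg_left hcb (by exact_mod_cast hm.le)

lemma lkTerm_eq_max {m : ℤ} {a b : ℝ} (hab : a ≤ b) : lkTerm m a b = max (m * b) (m * a) := by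
  unfold lkTerm
  rcases lt_trichotomy m 0 with hm | rfl | hm
  · rw [if_neg hm.not_gt, if_pos hm,
      max_eq_right (mul_le_mul_of_nonpos_left hab (by exact_mod_cast hm.le))]
  · simp
  · rw [if_pos hm, max_eq_left (mul_le_mul_of_nonneg_left hab (by exact_mod_cast hm.le))]

lemma lkTerm_of_nonpos {m : ℤ} (hm : m ≤ 0) (a b b' : ℝ) : lkTerm m a b = lkTerm m a b' := by
  simp [lkTerm, hm.not_gt]

lemma Lk_eq_sum_max {A B : Pt n → ℝ} (hAB : A ≤ B) {DU : Multiset (Box n)} {F : Finset (Pt n)}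
    (hF : allVertices DU ⊆ F) :
    Lk k A B DU = ∑ u ∈ F, max ((multDU k DU u : ℝ) * B u) ((multDU k DU u : ℝ) * A u) := by
  rw [Lk_eq_sum_lkTerm, ← sum_subset hF fun u _ hu => by simp [multDU_eq_zero_of_notMem hu]]
  exact sum_congr rfl fun u _ => lkTerm_eq_max (hAB u)

lemma Lk_congr {D : Set (Pt n)} {DU : Multiset (Box n)} (hDU : memRk k D DU) {A A' B B' : Pt n → ℝ}
    (hA : ∀ u ∈ D, A u = A' u) (hB : ∀ u ∈ D, B u = B' u) : Lk k A B DU = Lk k A' B' DU :=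
  sum_congr rfl fun u hu => by
    rw [hA u (hDU.mem_of_mem_allVertices hu), hB u (hDU.mem_of_mem_allVertices hu)]

lemma sum_multDU_mul_le_Lk {D : Set (Pt n)} {DU : Multiset (Box n)} (hDU : memRk k D DU)
    {A B C : Pt n → ℝ} (hAC : ∀ u ∈ D, A u ≤ C u) (hCB : ∀ u ∈ D, C u ≤ B u) :
    ∑ u ∈ allVertices DU, (multDU k DU u : ℝ) * C u ≤ Lk k A B DU :=
  sum_le_sum fun u hu => mul_le_lkTerm (hAC u (hDU.mem_of_mem_allVertices hu))
    (hCB u (hDU.mem_of_mem_allVertices hu))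

lemma Lk_update_of_nonpos (A B : Pt n → ℝ) {DU : Multiset (Box n)} {x : Pt n}
    (hx : multDU k DU x ≤ 0) (b : ℝ) : Lk k A (Function.update B x b) DU = Lk k A B DU := by
  simp only [Lk_eq_sum_lkTerm]
  refine sum_congr rfl fun u _ => ?_
  rcases eq_or_ne u x with rfl | hux
  · rw [Function.update_self, lkTerm_of_nonpos hx]
  · rw [Function.update_of_ne hux]

lemma Lk_eq_Lk_update_add (A B : Pt n → ℝ) {DU : Multiset (Box n)} {x : Pt n}
    (hx : 0 < multDU k DU x) (b : ℝ) :
    Lk k A B DU = Lk k A (Function.update B x b) DU + multDU k DU x * (B x - b) := by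
  have hxV : x ∈ allVertices DU := by
    by_contra h
    exact hx.ne' (multDU_eq_zero_of_notMem h)
  have hrest :
      ∑ u ∈ (allVertices DU).erase x, lkTerm (multDU k DU u) (A u) (Function.update B x b u) =
        ∑ u ∈ (allVertices DU).erase x, lkTerm (multDU k DU u) (A u) (B u) :=
    sum_congr rfl fun u hu => by rw [Function.update_of_ne (ne_of_mem_erase hu)]
  rw [Lk_eq_sum_lkTerm, Lk_eq_sum_lkTerm, ← add_sum_erase _ _ hxV, ← add_sum_erase _ _ hxV,
    hrest, Function.update_self]
  simp only [lkTerm, if_pos hx]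
  ring

lemma mul_sub_le_Lk {DU : Multiset (Box n)} (hDU : memRk k (cubeSet n) DU) {A B C : Pt n → ℝ}
    (hAC : ∀ u ∈ cubeSet n, A u ≤ C u) (hCB : ∀ u ∈ cubeSet n, C u ≤ B u)
    (hC : KIncreasingOn k (cubeSet n) C) {x : Pt n} (hx : 0 < multDU k DU x) :
    multDU k DU x * (B x - C x) ≤ Lk k A B DU := by
  have hCB' : ∀ u ∈ cubeSet n, C u ≤ Function.update B x (C x) u := fun u hu => by
    rcases eq_or_ne u x with rfl | hux
    · rw [Function.update_self]
    · rw [Function.update_of_ne hux]; exact hCB u hu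
  rw [Lk_eq_Lk_update_add A B hx (C x)]
  linarith [sum_multDU_mul_le_Lk hDU hAC hCB', hC.sum_multDU_mul_nonneg hDU]

lemma inCube_piecewise {x y : Pt n} (hx : inCube x) (hy : inCube y) (s : Finset (Fin n)) :
    inCube (s.piecewise x y) := fun i => by
  by_cases hi : i ∈ s
  · rw [piecewise_eq_of_mem _ _ _ hi]; exact hx i
  · rw [piecewise_eq_of_notMem _ _ _ hi]; exact hy i

/-- A `j`-box with a degenerate coordinate `i` at level `t > 0` is the face `{x_i = t}` of the
`(j+1)`-box obtained by lowering `lo i` to `0`, whose opposite face `{x_i = 0}` contributes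
nothing by groundedness. -/
lemma KIncreasingOn.of_succ {C : Pt n → ℝ} (hC0 : Grounded C) {j : ℕ} (hjn : j < n)
    (hC : KIncreasingOn (j + 1) (cubeSet n) C) : KIncreasingOn j (cubeSet n) C := by
  intro R hR _
  have ⟨hlo, hhi, hle, hcard⟩ := hR
  obtain ⟨i, hi⟩ : R.nondegᶜ.Nonempty := by
    rw [← card_pos, card_compl, Fintype.card_fin]
    exact Nat.sub_pos_of_lt (hcard ▸ hjn)
  have hi : i ∉ R.nondeg := mem_compl.mp hi
  have hdeg := Box.lo_eq_hi_of_notMem_nondeg hle hi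
  rcases (hlo i).1.eq_or_lt with h0 | hpos
  · refine (sum_eq_zero fun v hv => ?_).ge
    have hvi : v i = 0 := by
      rcases Box.mem_vertices_iff.mp hv i with h | h <;> simp [h, ← hdeg, ← h0]
    rw [hC0 v (hR.mem_cubeSet_of_mem_vertices hv) ⟨i, hvi⟩, mul_zero]
  set R' : Box n := ⟨Function.update R.lo i 0, R.hi⟩
  have hlo' : inCube R'.lo := by
    intro l
    rcases eq_or_ne l i with rfl | hl
    · simp [R']
    · simpa [R', Function.update_of_ne hl] using hlo l
  have hnondeg' : R'.nondeg = insert i R.nondeg := by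
    ext l
    rcases eq_or_ne l i with rfl | hl
    · simp [R', Box.nondeg, ← hdeg, hpos]
    · simp [R', Box.nondeg, hl]
  have hR' : R'.IsKBox (j + 1) := by
    refine ⟨hlo', hhi, fun l => ?_, ?_⟩
    · rcases eq_or_ne l i with rfl | hl
      · simpa [R'] using (hhi l).1
      · simpa [R', Function.update_of_ne hl] using hle l
    · change #R'.nondeg = j + 1
      rw [hnondeg', card_insert_of_notMem hi, Box.nondeg, hcard]
  have hbottom : ∀ s ∈ R.nondeg.powerset, C (s.piecewise R'.hi R'.lo) = 0 := fun s hs =>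
    hC0 _ (inCube_piecewise hhi hlo' s)
      ⟨i, by rw [piecewise_eq_of_notMem _ _ _ fun h => hi (mem_powerset.mp hs h)]; simp [R']⟩
  have htop : ∀ s ∈ R.nondeg.powerset,
      (insert i s).piecewise R'.hi R'.lo = s.piecewise R.hi R.lo := fun s hs => by
    funext l
    rcases eq_or_ne l i with rfl | hl
    · rw [piecewise_eq_of_mem _ _ _ (mem_insert_self l s),
        piecewise_eq_of_notMem _ _ _ fun h => hi (mem_powerset.mp hs h), ← hdeg]
    · simp only [piecewise, mem_insert, hl, false_or, R', Function.update_of_ne hl]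
  have hkey : Vvol (j + 1) C R' = Vvol j C R := by
    rw [Vvol_eq_sum_powerset hR', Vvol_eq_sum_powerset ⟨hlo, hhi, hle, hcard⟩, hnondeg',
      sum_powerset_insert hi, sum_eq_zero fun s hs => by rw [hbottom s hs, mul_zero], zero_add]
    refine sum_congr rfl fun s hs => ?_
    rw [htop s hs, insert_sdiff_insert, sdiff_insert_of_notMem hi]
  exact hkey ▸ hC R' hR' fun v hv => hR'.mem_cubeSet_of_mem_vertices hv

lemma KIncreasingOn.of_le {C : Pt n → ℝ} (hC0 : Grounded C) {j : ℕ} (hjk : j ≤ k) (hkn : k ≤ n)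
    (hC : KIncreasingOn k (cubeSet n) C) : KIncreasingOn j (cubeSet n) C := by
  induction k, hjk using Nat.le_induction with
  | base => exact hC
  | succ k _ ih => exact ih (by omega) (hC.of_succ hC0 (by omega))

lemma KIncreasingOn.le_update {C : Pt n → ℝ} (hC : KIncreasingOn 1 (cubeSet n) C) {x : Pt n}
    (hx : inCube x) {i : Fin n} {r : ℝ} (hxr : x i ≤ r) (hr : r ≤ 1) :
    C x ≤ C (Function.update x i r) := by
  rcases hxr.eq_or_lt with h | hlt
  · rw [← h, Function.update_eq_self]
  set R : Box n := ⟨x, Function.update x i r⟩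
  have hhi : inCube R.hi := by
    intro l
    rcases eq_or_ne l i with rfl | hl
    · simpa [R] using ⟨(hx l).1.trans hxr, hr⟩
    · simpa [R, Function.update_of_ne hl] using hx l
  have hnondeg : R.nondeg = {i} := by
    ext l
    rcases eq_or_ne l i with rfl | hl
    · simpa [R, Box.nondeg] using hlt
    · simp [R, Box.nondeg, hl]
  have hR : R.IsKBox 1 := by
    refine ⟨hx, hhi, fun l => ?_, ?_⟩
    · rcases eq_or_ne l i with rfl | hl
      · simpa [R] using hxr
      · simp [R, Function.update_of_ne hl]
    · change #R.nondeg = 1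
      rw [hnondeg, card_singleton]
  have := hC R hR fun v hv => hR.mem_cubeSet_of_mem_vertices hv
  have hpow : ({i} : Finset (Fin n)).powerset = {∅, {i}} := by
    ext s; simp [subset_singleton_iff]
  rw [Vvol_eq_sum_powerset hR, hnondeg, hpow, sum_pair (singleton_ne_empty i).symm] at this
  simpa [R, piecewise_singleton] using this

lemma KIncreasingOn.oneIncreasing {C : Pt n → ℝ} (hC : KIncreasingOn 1 (cubeSet n) C) :
    OneIncreasing C := by
  intro x y hx hy hxy
  have key : ∀ s : Finset (Fin n), C x ≤ C (s.piecewise y x) := by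
    intro s
    induction s using Finset.induction_on with
    | empty => rw [piecewise_empty]
    | insert i s hi ih =>
      rw [piecewise_insert]
      refine ih.trans (hC.le_update (inCube_piecewise hy hx s) ?_ (hy i).2)
      rw [piecewise_eq_of_notMem _ _ _ hi]
      exact hxy i
  simpa using key univ

lemma exists_mem_Icc_forall_Vvol_nonneg {ℓ h : Pt n → ℝ} (hℓh : ℓ ≤ h)
    (hL : ∀ DU, memRk k (cubeSet n) DU → 0 ≤ Lk k ℓ h DU) (G : Finset (Box n))
    (hG : memRk k (cubeSet n) G.val) : ∃ c ∈ Set.Icc ℓ h, ∀ R ∈ G, 0 ≤ Vvol k c R := by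
  have hdual : ∀ N : G → ℕ, 0 ≤ ∑ u ∈ allVertices G.val,
      max ((∑ R, (N R : ℝ) * (R : Box n).mult k u) * h u)
        ((∑ R, (N R : ℝ) * (R : Box n).mult k u) * ℓ u) := by
    intro N
    let DU := ∑ R : G, Multiset.replicate (N R) (R : Box n)
    have hmem : ∀ R ∈ DU, R ∈ G := fun R hR => by
      obtain ⟨j, -, hj⟩ := Multiset.mem_sum.mp hR
      exact Multiset.eq_of_mem_replicate hj ▸ j.2
    have hsub : allVertices DU ⊆ allVertices G.val := biUnion_subset.mpr fun R hR =>
      vertices_subset_allVertices (hmem R (Multiset.mem_toFinset.mp hR))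
    have := hL DU fun R hR => hG R (hmem R hR)
    rw [Lk_eq_sum_max hℓh hsub] at this
    simpa only [DU, multDU_sum_replicate, Int.cast_sum, Int.cast_mul, Int.cast_natCast] using this
  obtain ⟨c, hc, hcG⟩ := exists_mem_Icc_forall_sum_mul_nonneg (allVertices G.val)
    (fun R : G => fun u => ((R : Box n).mult k u : ℝ)) hℓh hdual
  refine ⟨c, hc, fun R hR => ?_⟩
  rw [← R.sum_mult_mul c (vertices_subset_allVertices hR)]
  exact hcG ⟨R, hR⟩

theorem exists_kIncreasingOn_between {ℓ h : Pt n → ℝ} (hℓh : ∀ u ∈ cubeSet n, ℓ u ≤ h u)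
    (hL : ∀ DU, memRk k (cubeSet n) DU → 0 ≤ Lk k ℓ h DU) :
    ∃ C, (∀ u ∈ cubeSet n, ℓ u ≤ C u ∧ C u ≤ h u) ∧ KIncreasingOn k (cubeSet n) C := by
  -- bounds that are ordered everywhere, so that `Set.Icc` below is compact, and agree with
  -- `ℓ, h` on the cube
  have hle : ℓ ⊓ h ≤ h ⊔ ℓ := inf_le_right.trans le_sup_left
  have hℓ : ∀ u ∈ cubeSet n, ℓ u = (ℓ ⊓ h) u := fun u hu => (inf_eq_left.mpr (hℓh u hu)).symm
  have hh : ∀ u ∈ cubeSet n, h u = (h ⊔ ℓ) u := fun u hu => (sup_eq_left.mpr (hℓh u hu)).symm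
  let Z : {R : Box n // R.IsKBox k} → Set (Pt n → ℝ) := fun R => {c | 0 ≤ Vvol k c R}
  have hZ : ∀ R, IsClosed (Z R) := fun R =>
    isClosed_le continuous_const (by unfold Vvol; fun_prop)
  obtain ⟨C, hCK, hCZ⟩ := isCompact_Icc.inter_iInter_nonempty Z hZ fun s => by
    obtain ⟨c, hc, hcs⟩ := exists_mem_Icc_forall_Vvol_nonneg hle
      (fun DU hDU => Lk_congr hDU hℓ hh ▸ hL DU hDU) (s.map (Function.Embedding.subtype _))
      fun R hR => by
        obtain ⟨R', -, rfl⟩ := mem_map.mp hR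
        exact ⟨R'.2, fun v hv => R'.2.mem_cubeSet_of_mem_vertices hv⟩
    exact ⟨c, hc, Set.mem_iInter₂.mpr fun R hR => hcs R (mem_map_of_mem _ hR)⟩
  refine ⟨C, fun u hu => ?_, fun R hR _ => Set.mem_iInter.mp hCZ ⟨R, hR⟩⟩
  rw [hℓ u hu, hh u hu]
  exact ⟨hCK.1 u, hCK.2 u⟩

lemma exists_memRk_multDU_eq_one (hkn : k ≤ n) {x : Pt n} (hx : inCube x) (hpos : ∀ i, 0 < x i) :
    ∃ DU, memRk k (cubeSet n) DU ∧ multDU k DU x = 1 := by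
  obtain ⟨s, -, hs⟩ := exists_subset_card_eq (show k ≤ #(univ : Finset (Fin n)) by simpa)
  let R : Box n := ⟨s.piecewise (fun i => x i / 2) x, x⟩
  have hnondeg : R.nondeg = s := by
    ext i
    by_cases hi : i ∈ s <;> simp [R, Box.nondeg, hi, hpos i]
  have hR : R.IsKBox k := by
    refine ⟨inCube_piecewise (fun i => ?_) hx s, hx, fun i => ?_,
      show #R.nondeg = k by rw [hnondeg, hs]⟩
    · exact ⟨by linarith [(hx i).1], by linarith [(hx i).2, (hx i).1]⟩
    · by_cases hi : i ∈ s <;> simp [R, hi, (hpos i).le]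
  refine ⟨{R}, fun R' hR' => ?_, ?_⟩
  · rw [Multiset.mem_singleton.mp hR']
    exact ⟨hR, fun v hv => hR.mem_cubeSet_of_mem_vertices hv⟩
  · simp only [multDU, Multiset.map_singleton, Multiset.sum_singleton, Box.mult]
    have hv : R.IsVertex x := fun _ => Or.inr rfl
    rw [if_pos hv]
    exact Box.sign_hi hR

def Admissible (k : ℕ) (A B C : Pt n → ℝ) : Prop :=
  MapsToI C ∧ Standardized C ∧ KIncreasingOn k (cubeSet n) C ∧
    ∀ u : Pt n, inCube u → A u ≤ C u ∧ C u ≤ B u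

variable {D : Set (Pt n)} {A B : Pt n → ℝ} {x : Pt n}

lemma Ppos_nonneg (hL : ∀ DU, memRk k D DU → 0 ≤ Lk k A B DU) :
    0 ≤ Ppos k D A B x :=
  Real.sInf_nonneg fun _ ⟨DU, hDU, _, hr⟩ => hr ▸ div_nonneg (hL DU hDU) (abs_nonneg _)

lemma mul_le_Lk_of_le_Ppos (hL : ∀ DU, memRk k D DU → 0 ≤ Lk k A B DU) {d : ℝ}
    (hd : d ≤ Ppos k D A B x) {DU : Multiset (Box n)} (hDU : memRk k D DU)
    (hx : 0 < multDU k DU x) : multDU k DU x * d ≤ Lk k A B DU := by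
  have hm : (0 : ℝ) < multDU k DU x := by exact_mod_cast hx
  have := hd.trans (csInf_le ⟨0, fun _ ⟨DU', hDU', _, hr⟩ => hr ▸ div_nonneg (hL DU' hDU')
    (abs_nonneg _)⟩ ⟨DU, hDU, hx, rfl⟩)
  rwa [abs_of_pos hm, le_div_iff₀ hm, mul_comm] at this

lemma le_Ppos_of_forall_mul_le_Lk (hne : ∃ DU, memRk k D DU ∧ 0 < multDU k DU x) {d : ℝ}
    (h : ∀ DU, memRk k D DU → 0 < multDU k DU x → multDU k DU x * d ≤ Lk k A B DU) :
    d ≤ Ppos k D A B x := by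
  obtain ⟨DU₀, hDU₀, hx₀⟩ := hne
  refine le_csInf ⟨_, DU₀, hDU₀, hx₀, rfl⟩ fun _ ⟨DU, hDU, hx, hr⟩ => ?_
  have hm : (0 : ℝ) < multDU k DU x := by exact_mod_cast hx
  rw [hr, abs_of_pos hm, le_div_iff₀ hm, mul_comm]
  exact h DU hDU hx

lemma exists_admissible_eq_of_le_Ppos (hk1 : 1 ≤ k) (hkn : k ≤ n) (hA : Standardized A)
    (hB : Standardized B) (hAI : MapsToI A) (hBI : MapsToI B)
    (hAB : ∀ x : Pt n, inCube x → A x ≤ B x)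
    (hL : ∀ DU, memRk k (cubeSet n) DU → 0 ≤ Lk k A B DU) (hx : inCube x)
    (hP : B x - A x ≤ Ppos k (cubeSet n) A B x) :
    ∃ C, Admissible k A B C ∧ C x = A x := by
  have hAB' : ∀ u ∈ cubeSet n, A u ≤ Function.update B x (A x) u := fun u hu => by
    rcases eq_or_ne u x with rfl | hux
    · rw [Function.update_self]
    · rw [Function.update_of_ne hux]; exact hAB u hu
  have hL' : ∀ DU, memRk k (cubeSet n) DU → 0 ≤ Lk k A (Function.update B x (A x)) DU := by
    intro DU hDU
    -- pinning `B` to `A x` at `x` lowers `Lk` by `m(x) (B x - A x)`, which `hP` bounds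
    rcases lt_or_ge 0 (multDU k DU x) with hm | hm
    · linarith [Lk_eq_Lk_update_add A B hm (A x), mul_le_Lk_of_le_Ppos hL hP hDU hm]
    · rw [Lk_update_of_nonpos A B hm]; exact hL DU hDU
  obtain ⟨C, hACB, hC⟩ := exists_kIncreasingOn_between hAB' hL'
  have hCB : ∀ u, inCube u → A u ≤ C u ∧ C u ≤ B u := fun u hu => by
    refine ⟨(hACB u hu).1, (hACB u hu).2.trans ?_⟩
    rcases eq_or_ne u x with rfl | hux
    · rw [Function.update_self]; exact hAB u hu
    · rw [Function.update_of_ne hux]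
  have hgr : Grounded C := fun u hu hz => by
    linarith [hCB u hu, hA.1 u hu hz, hB.1 u hu hz]
  have h1 : inCube (fun _ => (1 : ℝ) : Pt n) := fun _ => ⟨zero_le_one, le_rfl⟩
  refine ⟨C, ⟨fun u hu => ⟨(hAI u hu).1.trans (hCB u hu).1, (hCB u hu).2.trans (hBI u hu).2⟩,
    ⟨hgr, (hC.of_le hgr hk1 hkn).oneIncreasing, ?_⟩, hC, hCB⟩, ?_⟩
  · linarith [hCB _ h1, hA.2.2, (hBI _ h1).2]
  · have := hACB x hx
    rw [Function.update_self] at this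
    exact le_antisymm this.2 this.1

lemma le_Ppos_of_eq_sInf (hkn : k ≤ n) (hA : Grounded A) (hB : Grounded B)
    (hL : ∀ DU, memRk k (cubeSet n) DU → 0 ≤ Lk k A B DU) (hx : inCube x)
    (hne : {C | Admissible k A B C}.Nonempty)
    (hAx : A x = sInf ((fun C => C x) '' {C | Admissible k A B C})) :
    B x - A x ≤ Ppos k (cubeSet n) A B x := by
  by_cases hzero : ∃ i, x i = 0
  · rw [hA x hx hzero, hB x hx hzero, sub_zero]
    exact Ppos_nonneg hL
  push Not at hzero
  obtain ⟨DU₀, hDU₀, hm₀⟩ :=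
    exists_memRk_multDU_eq_one hkn hx fun i => (hx i).1.lt_of_ne' (hzero i)
  refine le_Ppos_of_forall_mul_le_Lk ⟨DU₀, hDU₀, hm₀ ▸ one_pos⟩ fun DU hDU hm => ?_
  have hm' : (0 : ℝ) < multDU k DU x := by exact_mod_cast hm
  have hinf : B x - Lk k A B DU / multDU k DU x ≤ A x :=
    hAx ▸ le_csInf (hne.image _) fun _ ⟨C, hC, hCx⟩ => by
      rw [← hCx, sub_le_comm, le_div_iff₀ hm', mul_comm]
      exact mul_sub_le_Lk hDU (fun u hu => (hC.2.2.2 u hu).1) (fun u hu => (hC.2.2.2 u hu).2)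
        hC.2.2.1 hm
  rw [sub_le_comm, le_div_iff₀ hm'] at hinf
  linarith

end KIncr

theorem stmt19_general (n k : ℕ) (hk1 : 1 ≤ k) (hkn : k ≤ n)
    (A B : Pt n → ℝ) (hA : Standardized A) (hB : Standardized B)
    (hAI : MapsToI A) (hBI : MapsToI B)
    (hAB : ∀ x : Pt n, inCube x → A x ≤ B x)
    (hL : ∀ DU : Multiset (Box n), memRk k (cubeSet n) DU → 0 ≤ Lk k A B DU) :
    (∀ x : Pt n, inCube x → B x - A x ≤ Ppos k (cubeSet n) A B x) ↔
    (∀ x : Pt n, inCube x →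
      A x = sInf {y : ℝ | ∃ C : Pt n → ℝ, MapsToI C ∧ Standardized C ∧
        KIncreasingOn k (cubeSet n) C ∧
        (∀ u : Pt n, inCube u → A u ≤ C u ∧ C u ≤ B u) ∧ y = C x}) := by
  have hset : ∀ x : Pt n, {y : ℝ | ∃ C : Pt n → ℝ, MapsToI C ∧ Standardized C ∧
      KIncreasingOn k (cubeSet n) C ∧ (∀ u : Pt n, inCube u → A u ≤ C u ∧ C u ≤ B u) ∧
      y = C x} = (fun C => C x) '' {C | Admissible k A B C} := fun x => by
    ext y
    simp [Admissible, and_assoc, eq_comm]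
  simp only [hset]
  constructor
  · intro hP x hx
    obtain ⟨C, hC, hCx⟩ := exists_admissible_eq_of_le_Ppos hk1 hkn hA hB hAI hBI hAB hL hx (hP x hx)
    symm
    refine IsLeast.csInf_eq ⟨⟨C, hC, hCx⟩, ?_⟩
    rintro _ ⟨C', hC', rfl⟩
    exact (hC'.2.2.2 x hx).1
  · intro hinf x hx
    have hne : {C | Admissible k A B C}.Nonempty := by
      by_contra! hemp
      have h1 := hinf (fun _ => 1) fun _ => ⟨zero_le_one, le_rfl⟩
      rw [hA.2.2, hemp, Set.image_empty, Real.sInf_empty] at h1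
      exact one_ne_zero h1
    exact le_Ppos_of_eq_sInf hkn hA.1 hB.1 hL hx hne (hinf x hx)

/-- Theorem 8.3: coherence at the lower bound for standardized
functions. -/
theorem stmt19 (n k : ℕ) (hn : 1 ≤ n) (hk1 : 1 ≤ k) (hkn : k ≤ n)
    (A B : Pt n → ℝ) (hA : Standardized A) (hB : Standardized B)
    (hAI : MapsToI A) (hBI : MapsToI B)
    (hAB : ∀ x : Pt n, inCube x → A x ≤ B x)
    (S : Set ℝ) (hS : S.Countable) (hSsub : S ⊆ Set.Icc (0:ℝ) 1)
    (hCondS : CondS A S ∨ CondS B S)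
    (hL : ∀ DU : Multiset (Box n), memRk k (cubeSet n) DU → 0 ≤ Lk k A B DU) :
    (∀ x : Pt n, inCube x → B x - A x ≤ Ppos k (cubeSet n) A B x) ↔
    (∀ x : Pt n, inCube x →
      A x = sInf {y : ℝ | ∃ C : Pt n → ℝ, MapsToI C ∧ Standardized C ∧
        KIncreasingOn k (cubeSet n) C ∧
        (∀ u : Pt n, inCube u → A u ≤ C u ∧ C u ≤ B u) ∧ y = C x}) :=
  stmt19_general n k hk1 hkn A B hA hB hAI hBI hAB hL
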